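/- For every integer n ≥ 1 and every real t, one has 1 − U_n(t)² = V_n⁺(t)/V_{n+1}⁺(t); in particular 1 − U_n(t)² > 0, i.e. |U_n(t)| < 1. -/

import Mathlib

open MeasureTheory Matrix Filter

/-- The k-th Fourier coefficient of the symbol `f(e^{iθ}) = e^{2t cos θ}`. -/
noncomputable def fk (t : ℝ) (k : ℤ) : ℝ :=
  (1 / (2 * Real.pi)) *
    ∫ θ in (0:ℝ)..(2 * Real.pi), Real.exp (2 * t * Real.cos θ) * Real.cos ((k : ℝ) * θ)

/-- The n×n Toeplitz matrix `T_n(t)` with (j,k) entry `f_{j-k}(t)`. -/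
noncomputable def Tmat (n : ℕ) (t : ℝ) : Matrix (Fin n) (Fin n) ℝ :=
  fun j k => fk t ((j : ℤ) - (k : ℤ))

/-- The Toeplitz determinant `D_n(t)`. -/
noncomputable def Dn (n : ℕ) (t : ℝ) : ℝ := (Tmat n t).det

/-- δ⁺ = (1,0,…,0)ᵀ. -/
def deltaPlus (n : ℕ) : Fin n → ℝ := fun i => if (i : ℕ) = 0 then 1 else 0

/-- δ⁻ = (0,…,0,1)ᵀ. -/
def deltaMinus (n : ℕ) : Fin n → ℝ := fun i => if (i : ℕ) = n - 1 then 1 else 0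

/-- f⁺ = (f_1,…,f_n)ᵀ. -/
noncomputable def fplus (n : ℕ) (t : ℝ) : Fin n → ℝ := fun j => fk t ((j : ℤ) + 1)

/-- f⁻ = (f_n,…,f_1)ᵀ. -/
noncomputable def fminus (n : ℕ) (t : ℝ) : Fin n → ℝ := fun j => fk t ((n : ℤ) - (j : ℤ))

/-- U_n(t) = ⟨T_n(t)⁻¹ f⁺, δ⁻⟩. -/
noncomputable def Un (n : ℕ) (t : ℝ) : ℝ :=
  dotProduct ((Tmat n t)⁻¹ *ᵥ fplus n t) (deltaMinus n)

/-- V_n⁺(t) = ⟨T_n(t)⁻¹ δ⁺, δ⁺⟩. -/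
noncomputable def Vplus (n : ℕ) (t : ℝ) : ℝ :=
  dotProduct ((Tmat n t)⁻¹ *ᵥ deltaPlus n) (deltaPlus n)

/-- V_n⁻(t) = ⟨T_n(t)⁻¹ δ⁻, δ⁺⟩. -/
noncomputable def Vminus (n : ℕ) (t : ℝ) : ℝ :=
  dotProduct ((Tmat n t)⁻¹ *ᵥ deltaMinus n) (deltaPlus n)

/-!
Write `T = T_n`, `A = T_{n+1}`, `x = T⁻¹ f⁺`, `z = T⁻¹ δ⁺`, `U = x_{n-1}` and `s = f₀ - ⟨f⁺, x⟩`.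
Bordering `T` by a first row and column gives `A (1, -x) = s δ⁺`. Bordering it by a last row and
column gives `A (s z + U · rev x, -U) = s δ⁺`, because `T` commutes with the reversal of
coordinates, so `rev x` solves `T y = f⁻`. Pairing both identities with `w = A⁻¹ δ⁺` through the
symmetry of `A` yields `s w₀ = 1` and `s w₀ = s z₀ + U²`, that is
`1 - U² = z₀ / w₀ = V_n⁺ / V_{n+1}⁺`. Positivity holds because `T_n` is the Toeplitz matrix of the
positive symbol `e^{2t cos θ}`.
-/

def toeplitz {K : Type*} (a : ℤ → K) (n : ℕ) : Matrix (Fin n) (Fin n) K :=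
  of fun j k => a ((j : ℤ) - (k : ℤ))

def shiftedCoeffs {K : Type*} (a : ℤ → K) (n : ℕ) : Fin n → K := fun j => a ((j : ℤ) + 1)

namespace toeplitz

variable {K : Type*} {a : ℤ → K} {n : ℕ}

@[simp]
lemma apply (a : ℤ → K) (j k : Fin n) : toeplitz a n j k = a ((j : ℤ) - (k : ℤ)) := rfl

lemma transpose (ha : ∀ k, a (-k) = a k) : (toeplitz a n)ᵀ = toeplitz a n := by
  ext j k
  simp [← ha ((k : ℤ) - j)]

lemma rev_rev (ha : ∀ k, a (-k) = a k) (j k : Fin n) :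
    toeplitz a n j.rev k.rev = toeplitz a n j k := by
  rw [apply, apply, ← ha]
  congr 1
  simp only [Fin.val_rev]
  omega

@[simp]
lemma castSucc_castSucc (a : ℤ → K) (j k : Fin n) :
    toeplitz a (n + 1) j.castSucc k.castSucc = toeplitz a n j k := rfl

@[simp]
lemma succ_succ (a : ℤ → K) (j k : Fin n) :
    toeplitz a (n + 1) j.succ k.succ = toeplitz a n j k := by
  simp only [apply, Fin.val_succ]
  congr 1
  omega

section CommRing

variable [CommRing K]

lemma mulVec_dotProduct (ha : ∀ k, a (-k) = a k) (v w : Fin n → K) :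
    toeplitz a n *ᵥ v ⬝ᵥ w = v ⬝ᵥ toeplitz a n *ᵥ w := by
  rw [dotProduct_comm, dotProduct_mulVec, ← mulVec_transpose, transpose ha, dotProduct_comm]

lemma mulVec_comp_rev (ha : ∀ k, a (-k) = a k) (v : Fin n → K) :
    toeplitz a n *ᵥ (v ∘ Fin.rev) = (toeplitz a n *ᵥ v) ∘ Fin.rev := by
  ext j
  simp only [mulVec, dotProduct, Function.comp_apply]
  exact Fintype.sum_equiv Fin.revPerm _ _ fun k => by rw [Fin.revPerm_apply, rev_rev ha]


lemma mulVec_cons (ha : ∀ k, a (-k) = a k) {x : Fin n → K}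
    (hx : toeplitz a n *ᵥ x = shiftedCoeffs a n) :
    toeplitz a (n + 1) *ᵥ Fin.cons 1 (-x) = Pi.single 0 (a 0 - shiftedCoeffs a n ⬝ᵥ x) := by
  ext i
  cases i using Fin.cases with
  | zero =>
    simp [mulVec, dotProduct, Fin.sum_univ_succ, shiftedCoeffs, ← ha ((_ : ℤ) + 1),
      sub_eq_add_neg]
  | succ j =>
    have hxj := congrFun hx j
    simp only [mulVec, dotProduct, apply, shiftedCoeffs] at hxj
    simp [mulVec, dotProduct, Fin.sum_univ_succ, hxj]

lemma mulVec_snoc (ha : ∀ k, a (-k) = a k) {x z : Fin (n + 1) → K}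
    (hx : toeplitz a (n + 1) *ᵥ x = shiftedCoeffs a (n + 1))
    (hz : toeplitz a (n + 1) *ᵥ z = Pi.single 0 1) (s : K)
    (hs : s = a 0 - shiftedCoeffs a (n + 1) ⬝ᵥ x) :
    toeplitz a (n + 2) *ᵥ Fin.snoc (s • z + x (Fin.last n) • (x ∘ Fin.rev)) (-x (Fin.last n)) =
      Pi.single 0 s := by
  have hrev : toeplitz a (n + 1) *ᵥ (x ∘ Fin.rev) = shiftedCoeffs a (n + 1) ∘ Fin.rev := by
    rw [mulVec_comp_rev ha, hx]
  have hlast (j : Fin (n + 1)) :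
      toeplitz a (n + 2) (Fin.last (n + 1)) j.castSucc = shiftedCoeffs a (n + 1) j.rev := by
    simp only [apply, shiftedCoeffs, Fin.val_last, Fin.val_castSucc, Fin.val_rev]
    congr 1
    omega
  have hcol (j : Fin (n + 1)) :
      toeplitz a (n + 2) j.castSucc (Fin.last (n + 1)) = shiftedCoeffs a (n + 1) j.rev := by
    rw [← hlast, ← transpose_apply (toeplitz a (n + 2)), transpose ha]
  ext i
  cases i using Fin.lastCases with
  | cast j =>
    rw [mulVec, dotProduct, Fin.sum_univ_castSucc]
    simp only [Fin.snoc_castSucc, Fin.snoc_last, castSucc_castSucc, hcol]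
    change (toeplitz a (n + 1) *ᵥ (s • z + x (Fin.last n) • (x ∘ Fin.rev))) j + _ = _
    rw [mulVec_add, mulVec_smul, mulVec_smul, hz, hrev]
    simp only [Pi.add_apply, Pi.smul_apply, Pi.single_apply, smul_eq_mul, mul_ite, mul_one,
      mul_zero, Function.comp_apply, mul_neg, Fin.castSucc_eq_zero_iff]
    ring
  | last =>
    have hU : shiftedCoeffs a (n + 1) ∘ Fin.rev ⬝ᵥ z = x (Fin.last n) := by
      rw [← hrev, mulVec_dotProduct ha, hz, dotProduct_single, mul_one, Function.comp_apply,
        Fin.rev_zero]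
    have hfx : shiftedCoeffs a (n + 1) ∘ Fin.rev ⬝ᵥ x ∘ Fin.rev = shiftedCoeffs a (n + 1) ⬝ᵥ x :=
      comp_equiv_dotProduct_comp_equiv _ _ Fin.revPerm
    rw [mulVec, dotProduct, Fin.sum_univ_castSucc]
    simp only [Fin.snoc_castSucc, Fin.snoc_last, hlast]
    change shiftedCoeffs a (n + 1) ∘ Fin.rev ⬝ᵥ (s • z + x (Fin.last n) • (x ∘ Fin.rev)) + _ = _
    rw [dotProduct_add, dotProduct_smul, dotProduct_smul, hU, hfx]
    rw [Pi.single_eq_of_ne Fin.last_pos'.ne', apply, sub_self, hs, smul_eq_mul, smul_eq_mul]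
    ring

end CommRing

theorem one_sub_sq_eq_div [Field K] (ha : ∀ k, a (-k) = a k)
    {x z : Fin (n + 1) → K} {w : Fin (n + 2) → K}
    (hx : toeplitz a (n + 1) *ᵥ x = shiftedCoeffs a (n + 1))
    (hz : toeplitz a (n + 1) *ᵥ z = Pi.single 0 1)
    (hw : toeplitz a (n + 2) *ᵥ w = Pi.single 0 1) :
    1 - x (Fin.last n) ^ 2 = z 0 / w 0 := by
  set s := a 0 - shiftedCoeffs a (n + 1) ⬝ᵥ x with hs
  have hv : s * w 0 = 1 := by
    have := mulVec_dotProduct ha (Fin.cons 1 (-x)) w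
    rw [mulVec_cons ha hx, hw, single_dotProduct, dotProduct_single] at this
    simpa using this
  have hq : s * w 0 = s * z 0 + x (Fin.last n) ^ 2 := by
    have := mulVec_dotProduct ha
      (Fin.snoc (s • z + x (Fin.last n) • (x ∘ Fin.rev)) (-x (Fin.last n))) w
    rw [mulVec_snoc ha hx hz s hs, hw, single_dotProduct, dotProduct_single] at this
    simpa [sq] using this
  rw [eq_div_iff (right_ne_zero_of_mul_eq_one hv)]
  linear_combination (z 0 - w 0) * hv + w 0 * hq

end toeplitz

open Real

lemma fk_neg (t : ℝ) (k : ℤ) : fk t (-k) = fk t k := by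
  unfold fk
  congr 2 with θ
  rw [Int.cast_neg, neg_mul, cos_neg]

lemma integral_cos_int_mul (a : ℤ) :
    ∫ θ in (0 : ℝ)..2 * π, cos (a * θ) = if a = 0 then 2 * π else 0 := by
  split_ifs with h
  · simp [h]
  · have ha : (a : ℝ) ≠ 0 := Int.cast_ne_zero.2 h
    rw [intervalIntegral.integral_comp_mul_left cos ha, integral_cos, mul_zero, sin_zero,
      sub_zero, ← mul_assoc, ← Int.cast_ofNat, ← Int.cast_mul, sin_int_mul_pi, smul_zero]

/-- `|∑ⱼ c j e^{ijθ}|²`. -/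
noncomputable def trigPolyNormSq {m : ℕ} (c : Fin m → ℝ) (θ : ℝ) : ℝ :=
  (∑ j, c j * cos (j * θ)) ^ 2 + (∑ j, c j * sin (j * θ)) ^ 2

lemma trigPolyNormSq_eq_sum_sum {m : ℕ} (c : Fin m → ℝ) (θ : ℝ) :
    trigPolyNormSq c θ = ∑ j, ∑ k, c j * c k * cos (((j : ℤ) - (k : ℤ) : ℤ) * θ) := by
  simp only [trigPolyNormSq, sq, Finset.sum_mul_sum, ← Finset.sum_add_distrib]
  refine Finset.sum_congr rfl fun j _ => Finset.sum_congr rfl fun k _ => ?_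
  push_cast
  rw [sub_mul, cos_sub]
  ring

lemma integral_mul_trigPolyNormSq {w : ℝ → ℝ} (hw : Continuous w) {m : ℕ} (c : Fin m → ℝ) :
    ∫ θ in (0 : ℝ)..2 * π, w θ * trigPolyNormSq c θ =
      ∑ j, ∑ k, c j * c k * ∫ θ in (0 : ℝ)..2 * π, w θ * cos (((j : ℤ) - (k : ℤ) : ℤ) * θ) := by
  simp only [trigPolyNormSq_eq_sum_sum, Finset.mul_sum]
  rw [intervalIntegral.integral_finsetSum fun j _ => ?_]
  · refine Finset.sum_congr rfl fun j _ => ?_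
    rw [intervalIntegral.integral_finsetSum fun k _ => ?_]
    · refine Finset.sum_congr rfl fun k _ => ?_
      rw [← intervalIntegral.integral_const_mul]
      congr 1 with θ
      ring
    · exact (by fun_prop : Continuous _).intervalIntegrable _ _
  · exact (continuous_finsetSum _ fun k _ => by fun_prop).intervalIntegrable _ _

lemma integral_trigPolyNormSq {m : ℕ} (c : Fin m → ℝ) :
    ∫ θ in (0 : ℝ)..2 * π, trigPolyNormSq c θ = 2 * π * ∑ j, c j ^ 2 := by
  have := integral_mul_trigPolyNormSq continuous_const (w := fun _ => 1) c
  simp only [one_mul, integral_cos_int_mul, sub_eq_zero, Int.natCast_inj, Fin.val_inj] at this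
  rw [this, Finset.mul_sum]
  refine Finset.sum_congr rfl fun j _ => ?_
  simp only [mul_ite, mul_zero, Finset.sum_ite_eq, Finset.mem_univ, if_true]
  ring

lemma dotProduct_Tmat_mulVec (m : ℕ) (t : ℝ) (c : Fin m → ℝ) :
    c ⬝ᵥ (Tmat m t *ᵥ c) =
      1 / (2 * π) * ∫ θ in (0 : ℝ)..2 * π, exp (2 * t * cos θ) * trigPolyNormSq c θ := by
  rw [integral_mul_trigPolyNormSq (by fun_prop), Finset.mul_sum]
  simp only [dotProduct, mulVec, Tmat, fk, Finset.mul_sum]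
  refine Finset.sum_congr rfl fun j _ => Finset.sum_congr rfl fun k _ => ?_
  ring

lemma exp_neg_two_abs_le (t θ : ℝ) : exp (-(2 * |t|)) ≤ exp (2 * t * cos θ) := by
  have : |t * cos θ| ≤ |t| := by
    rw [abs_mul]
    exact mul_le_of_le_one_right (abs_nonneg t) (abs_cos_le_one θ)
  gcongr
  linarith [neg_abs_le (t * cos θ)]

lemma Tmat_posDef (m : ℕ) (t : ℝ) : (Tmat m t).PosDef := by
  refine .of_dotProduct_mulVec_pos ?_ fun c hc => ?_
  · exact isHermitian_iff_isSymm.2 (toeplitz.transpose (fk_neg t))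
  have hsum : 0 < ∑ j, c j ^ 2 := by
    obtain ⟨i, hi⟩ := Function.ne_iff.1 hc
    exact Finset.sum_pos' (fun j _ => sq_nonneg _) ⟨i, Finset.mem_univ i, sq_pos_of_ne_zero hi⟩
  have hlow : exp (-(2 * |t|)) * (2 * π * ∑ j, c j ^ 2) ≤
      ∫ θ in (0 : ℝ)..2 * π, exp (2 * t * cos θ) * trigPolyNormSq c θ := by
    rw [← integral_trigPolyNormSq, ← intervalIntegral.integral_const_mul]
    have hP : Continuous (trigPolyNormSq c) := by unfold trigPolyNormSq; fun_prop
    refine intervalIntegral.integral_mono_on (by positivity)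
      ((by fun_prop : Continuous _).intervalIntegrable _ _)
      ((by fun_prop : Continuous _).intervalIntegrable _ _) fun θ _ => ?_
    exact mul_le_mul_of_nonneg_right (exp_neg_two_abs_le t θ)
      (by unfold trigPolyNormSq; positivity)
  rw [star_trivial, dotProduct_Tmat_mulVec]
  exact mul_pos (by positivity) (lt_of_lt_of_le (by positivity) hlow)

lemma deltaPlus_succ (n : ℕ) : deltaPlus (n + 1) = Pi.single 0 1 := by
  ext i
  simp only [deltaPlus, Pi.single_apply, Fin.ext_iff, Fin.val_zero]

lemma deltaMinus_succ (n : ℕ) : deltaMinus (n + 1) = Pi.single (Fin.last n) 1 := by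
  ext i
  simp only [deltaMinus, Pi.single_apply, Fin.ext_iff, Fin.val_last, Nat.add_sub_cancel]

lemma Vplus_succ (n : ℕ) (t : ℝ) :
    Vplus (n + 1) t = ((Tmat (n + 1) t)⁻¹ *ᵥ Pi.single 0 1) 0 := by
  rw [Vplus, deltaPlus_succ, dotProduct_single, mul_one]

lemma Un_succ (n : ℕ) (t : ℝ) :
    Un (n + 1) t = ((Tmat (n + 1) t)⁻¹ *ᵥ fplus (n + 1) t) (Fin.last n) := by
  rw [Un, deltaMinus_succ, dotProduct_single, mul_one]

lemma Tmat_mulVec_inv_mulVec (n : ℕ) (t : ℝ) (v : Fin n → ℝ) :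
    Tmat n t *ᵥ ((Tmat n t)⁻¹ *ᵥ v) = v := by
  rw [mulVec_mulVec, mul_nonsing_inv _ ((Tmat_posDef n t).isUnit.map detMonoidHom), one_mulVec]

lemma Vplus_succ_pos (n : ℕ) (t : ℝ) : 0 < Vplus (n + 1) t := by
  rw [Vplus_succ, mulVec_single_one]
  exact (Tmat_posDef (n + 1) t).inv.diag_pos

/-- 1 − U_n(t)² = V_n⁺(t)/V_{n+1}⁺(t); in particular 1 − U_n(t)² > 0, i.e. |U_n(t)| < 1. -/
theorem one_sub_Un_sq_eq_Vplus_ratio (n : ℕ) (hn : 1 ≤ n) (t : ℝ) :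
    1 - (Un n t) ^ 2 = Vplus n t / Vplus (n + 1) t ∧
      0 < 1 - (Un n t) ^ 2 ∧ |Un n t| < 1 := by
  obtain ⟨m, rfl⟩ : ∃ m, n = m + 1 := ⟨n - 1, by omega⟩
  have hratio : 1 - Un (m + 1) t ^ 2 = Vplus (m + 1) t / Vplus (m + 1 + 1) t := by
    rw [Un_succ, Vplus_succ, Vplus_succ]
    exact toeplitz.one_sub_sq_eq_div (fk_neg t) (Tmat_mulVec_inv_mulVec _ t _)
      (Tmat_mulVec_inv_mulVec _ t _) (Tmat_mulVec_inv_mulVec _ t _)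
  have hpos : 0 < 1 - Un (m + 1) t ^ 2 :=
    hratio ▸ div_pos (Vplus_succ_pos m t) (Vplus_succ_pos (m + 1) t)
  exact ⟨hratio, hpos, (sq_lt_one_iff_abs_lt_one _).1 (by linarith)⟩
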